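/- arXiv:2505.07588 — 3 statements merged into one kernel-verified Lean document; each statement's English description precedes it below -/
import Mathlib

section
/- For n ≥ 3, the cat number of the cycle on n vertices satisfies cat(C_n) = ⌈log₂(2⌊n/2⌋)⌉ + 1; equivalently, cat(C_{2k}) = cat(C_{2k+1}) = ⌈log₂(2k)⌉ + 1 for 2k ≥ 3. -/
open SimpleGraph

universe u

/-- The cat can move from `u` to `w` in `G`: there is a nontrivial path,
equivalently `w ≠ u` and `w` is reachable from `u`. -/
def CatMove {V : Type u} (G : SimpleGraph V) (u w : V) : Prop :=
  u ≠ w ∧ G.Reachable u w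

/-- `CapturedIn G v n` : with the cat on `v` and the herder to cut next,
the herder can guarantee that the cat is isolated after at most `n` edge deletions. -/
inductive CapturedIn {V : Type u} : SimpleGraph V → V → ℕ → Prop
  | isolated {G : SimpleGraph V} {v : V} {n : ℕ} (h : ∀ w, ¬ G.Adj v w) :
      CapturedIn G v n
  | cut {G : SimpleGraph V} {v : V} {n : ℕ} (e : Sym2 V) (he : e ∈ G.edgeSet)
      (h : ∀ w, CatMove (G.deleteEdges {e}) v w → CapturedIn (G.deleteEdges {e}) w n) :
      CapturedIn G v (n + 1)

/-- The cat number of `G` with the cat starting at `v` (the game value; `⊤` if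
the herder cannot guarantee capture within any fixed number of cuts). -/
noncomputable def catVNum {V : Type u} (G : SimpleGraph V) (v : V) : ℕ∞ :=
  sInf (Nat.cast '' {m : ℕ | CapturedIn G v m})

/-- The cat number of `G`: the cat picks the best starting vertex. -/
noncomputable def catNum {V : Type u} (G : SimpleGraph V) : ℕ∞ :=
  ⨆ v, catVNum G v

/-- The cat, starting at `v`, can evade capture forever: there is a set of safe
positions (remaining graph, cat location), closed under responding to any cut. -/
def CatWinFrom {V : Type u} (G : SimpleGraph V) (v : V) : Prop :=
  ∃ S : Set (SimpleGraph V × V), (G, v) ∈ S ∧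
    ∀ p ∈ S, (∃ w, p.1.Adj p.2 w) ∧
      ∀ e ∈ p.1.edgeSet, ∃ w, CatMove (p.1.deleteEdges {e}) p.2 w ∧
        (p.1.deleteEdges {e}, w) ∈ S

/-- `G` is cat-win if the cat can evade capture forever from some starting vertex. -/
def CatWin {V : Type u} (G : SimpleGraph V) : Prop :=
  ∃ v, CatWinFrom G v

/-- `Evades G v n` : the cat on `v` has a strategy giving a valid response to each
of the next `n` cuts. -/
inductive Evades {V : Type u} : SimpleGraph V → V → ℕ → Prop
  | zero {G : SimpleGraph V} {v : V} : Evades G v 0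
  | succ {G : SimpleGraph V} {v : V} {n : ℕ} (move : Sym2 V → V)
      (hmove : ∀ e ∈ G.edgeSet, CatMove (G.deleteEdges {e}) v (move e))
      (h : ∀ e ∈ G.edgeSet, Evades (G.deleteEdges {e}) (move e) n) :
      Evades G v (n + 1)

/-- `G` is `k`-evadible for every `k`: for each `n` the cat can respond to the
first `n` cuts from a suitable starting vertex. -/
def OmegaEvadible {V : Type u} (G : SimpleGraph V) : Prop :=
  ∀ n : ℕ, ∃ v, Evades G v n

/-- The infinite complete binary tree on binary strings. -/
def binTree : SimpleGraph (List Bool) :=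
  SimpleGraph.fromRel (fun a b => ∃ t : Bool, b = a ++ [t])

/-- `H` is a minor of `G` : disjoint connected branch sets, one per vertex of `H`,
with an edge of `G` between branch sets for every edge of `H`. -/
def IsMinor {W : Type*} {V : Type u} (H : SimpleGraph W) (G : SimpleGraph V) : Prop :=
  ∃ B : W → Set V,
    (∀ w, (G.induce (B w)).Connected) ∧
    (Pairwise fun w₁ w₂ => Disjoint (B w₁) (B w₂)) ∧
    (∀ w₁ w₂, H.Adj w₁ w₂ → ∃ x ∈ B w₁, ∃ y ∈ B w₂, G.Adj x y)

/-- Every pair of distinct vertices is joined by two edge-disjoint (finite) paths. -/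
def TwoEdgeConnected {V : Type u} (G : SimpleGraph V) : Prop :=
  ∀ u v : V, u ≠ v → ∃ (p q : G.Walk u v), p.IsPath ∧ q.IsPath ∧
    ∀ e ∈ p.edges, e ∉ q.edges

/-- `x` has degree exactly 1 in `G`. -/
def DegOne {V : Type u} (G : SimpleGraph V) (x : V) : Prop :=
  ∃ a, G.neighborSet x = {a}

/-- `x` has degree exactly 2 in `G`. -/
def DegTwo {V : Type u} (G : SimpleGraph V) (x : V) : Prop :=
  ∃ a b, a ≠ b ∧ G.neighborSet x = {a, b}

/-- `x` has degree exactly 3 in `G`. -/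
def DegThree {V : Type u} (G : SimpleGraph V) (x : V) : Prop :=
  ∃ a b c, a ≠ b ∧ a ≠ c ∧ b ≠ c ∧ G.neighborSet x = {a, b, c}

/-- `x` has degree at least `k` in `G`. -/
def DegGe {V : Type u} (G : SimpleGraph V) (x : V) (k : ℕ) : Prop :=
  ∃ s : Finset V, s.card = k ∧ ∀ a ∈ s, G.Adj x a

/-! After the first cut the cycle is a path, and on a path the game is explicit. If the cat is at
distance `d` from the nearer end of a path, the herder cuts the edge beside it on that side; the cat
is left on a path with `d` edges, where its best move is to the middle, so `⌈log₂ (d + 1)⌉ + 1`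
cuts suffice. Conversely, whichever edge is cut, the cat's piece still has at least `d` edges and
the cat is at distance at least `d` from one of its ends, so it can move to a vertex at distance
at least `⌊d / 2⌋` from both ends, which by induction keeps it free for `⌈log₂ (d + 1)⌉` more cuts.

On `C_n` the herder's first cut is the edge opposite the cat, which leaves it in the middle of a
path with `n - 1` edges, so that after moving it is at distance at most `⌊n / 2⌋ - 1` from an end;
whichever edge is cut first, the cat can move to a vertex at that distance from both ends. -/

theorem CapturedIn.mono {V : Type u} {G : SimpleGraph V} {v : V} {m m' : ℕ}
    (h : CapturedIn G v m) (hm : m ≤ m') : CapturedIn G v m' := by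
  induction h generalizing m' with
  | isolated h => exact .isolated h
  | cut e he _ ih =>
    obtain ⟨m', rfl⟩ : ∃ k, m' = k + 1 := ⟨m' - 1, by omega⟩
    exact .cut e he fun w hw => ih w hw (by omega)

theorem catVNum_eq {V : Type u} {G : SimpleGraph V} {v : V} {m : ℕ} (h : CapturedIn G v m)
    (hle : ∀ t, CapturedIn G v t → m ≤ t) : catVNum G v = m :=
  le_antisymm (sInf_le ⟨m, h, rfl⟩) <| le_sInf <| by
    rintro _ ⟨t, ht, rfl⟩
    exact_mod_cast hle t ht

theorem Nat.clog_two_add_one {d : ℕ} (hd : d ≠ 0) : clog 2 (d + 1) = clog 2 (d / 2 + 1) + 1 := by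
  rw [clog_of_two_le one_lt_two (by omega)]
  congr 2
  omega

theorem Nat.clog_two_mul {k : ℕ} (hk : k ≠ 0) : clog 2 (2 * k) = clog 2 k + 1 := by
  rw [clog_of_two_le one_lt_two (by omega), show (2 * k + 2 - 1) / 2 = k by omega]

theorem exists_ne_half_le_min {L p d : ℕ} (hL : 0 < L) (hp : p ≤ L) (hd : d ≤ max p (L - p)) :
    ∃ q ≤ L, q ≠ p ∧ d / 2 ≤ min q (L - q) := by
  by_cases hmid : p = L / 2
  · by_cases heven : L - L / 2 = L / 2
    · exact ⟨p - 1, by omega, by omega, by omega⟩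
    · exact ⟨L - L / 2, by omega, by omega, by omega⟩
  · exact ⟨L / 2, by omega, Ne.symm hmid, by omega⟩

theorem Set.InjOn.sym2_mk_eq_iff {α β : Type*} {f : α → β} {t : Set α} (hf : t.InjOn f)
    {a b c d : α} (ha : a ∈ t) (hb : b ∈ t) (hc : c ∈ t) (hd : d ∈ t) :
    s(f a, f b) = s(f c, f d) ↔ s(a, b) = s(c, d) := by
  simp only [Sym2.eq_iff, hf.eq_iff ha hc, hf.eq_iff hb hd, hf.eq_iff ha hd, hf.eq_iff hb hc]

/-- The vertices `f 0, …, f L` are distinct and form a path `f 0 — f 1 — ⋯ — f L` which is a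
whole connected component of `G` (values of `f` beyond `L` are irrelevant). -/
structure IsPathComponent {V : Type*} (G : SimpleGraph V) (f : ℕ → V) (L : ℕ) : Prop where
  injOn : Set.InjOn f (Set.Iic L)
  adj_succ : ∀ i < L, G.Adj (f i) (f (i + 1))
  eq_of_adj : ∀ i ≤ L, ∀ w, G.Adj (f i) w → ∃ j ≤ L, w = f j ∧ (j = i + 1 ∨ i = j + 1)

namespace IsPathComponent

variable {V : Type*} {G : SimpleGraph V} {f : ℕ → V} {L : ℕ}

theorem congr {g : ℕ → V} (h : IsPathComponent G f L) (hfg : ∀ i ≤ L, f i = g i) :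
    IsPathComponent G g L where
  injOn i hi j hj hij := h.injOn hi hj (by rwa [hfg i hi, hfg j hj])
  adj_succ i hi := by simpa only [hfg i hi.le, hfg (i + 1) hi] using h.adj_succ i hi
  eq_of_adj i hi w hw := by
    obtain ⟨j, hj, rfl, hij⟩ := h.eq_of_adj i hi w (hfg i hi ▸ hw)
    exact ⟨j, hj, hfg j hj, hij⟩

theorem reverse (h : IsPathComponent G f L) : IsPathComponent G (fun i => f (L - i)) L where
  injOn i hi j hj hij := by
    have := h.injOn (show L - i ≤ L by omega) (show L - j ≤ L by omega) hij
    simp only [Set.mem_Iic] at hi hj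
    omega
  adj_succ i hi := by
    simpa [show L - i = L - (i + 1) + 1 by omega] using (h.adj_succ (L - (i + 1)) (by omega)).symm
  eq_of_adj i hi w hw := by
    obtain ⟨j, hj, rfl, hij⟩ := h.eq_of_adj (L - i) (by omega) w hw
    exact ⟨L - j, by omega, by rw [Nat.sub_sub_self hj], by omega⟩

theorem reachable (h : IsPathComponent G f L) {p q : ℕ} (hp : p ≤ L) (hq : q ≤ L) :
    G.Reachable (f p) (f q) := by
  have from_zero : ∀ q ≤ L, G.Reachable (f 0) (f q) := by
    intro q hq
    induction q with
    | zero => rfl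
    | succ q ih => exact (ih (by omega)).trans (h.adj_succ q (by omega)).reachable
  exact (from_zero p hp).symm.trans (from_zero q hq)

theorem exists_eq_of_reachable (h : IsPathComponent G f L) {p : ℕ} (hp : p ≤ L) {w : V}
    (hw : G.Reachable (f p) w) : ∃ q ≤ L, w = f q := by
  obtain ⟨walk⟩ := hw
  generalize hu : f p = u at walk
  induction walk generalizing p with
  | nil => exact ⟨p, hp, hu.symm⟩
  | cons hadj _ ih =>
    obtain ⟨j, hj, rfl, -⟩ := h.eq_of_adj p hp _ (hu ▸ hadj)
    exact ih hj rfl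

theorem catMove_iff (h : IsPathComponent G f L) {p : ℕ} (hp : p ≤ L) {w : V} :
    CatMove G (f p) w ↔ ∃ q ≤ L, q ≠ p ∧ w = f q := by
  constructor
  · rintro ⟨hne, hw⟩
    obtain ⟨q, hq, rfl⟩ := h.exists_eq_of_reachable hp hw
    exact ⟨q, hq, fun hqp => hne (hqp ▸ rfl), rfl⟩
  · rintro ⟨q, hq, hqp, rfl⟩
    exact ⟨fun hpq => hqp (h.injOn hq hp hpq.symm), h.reachable hp hq⟩

theorem mem_edgeSet_cases (h : IsPathComponent G f L) {e : Sym2 V} (he : e ∈ G.edgeSet) :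
    (∃ j < L, e = s(f j, f (j + 1))) ∨ ∀ i ≤ L, f i ∉ e := by
  induction e using Sym2.ind with
  | _ x y =>
    rw [or_iff_not_imp_right]
    push Not
    rintro ⟨i, hi, hmem⟩
    have from_f_i {x y : V} (hxy : G.Adj x y) (hx : x = f i) :
        ∃ j < L, s(x, y) = s(f j, f (j + 1)) := by
      subst hx
      obtain ⟨j, hj, rfl, rfl | rfl⟩ := h.eq_of_adj i hi y hxy
      · exact ⟨i, by omega, rfl⟩
      · exact ⟨j, by omega, Sym2.eq_swap⟩
    rcases Sym2.mem_iff.mp hmem with hx | hy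
    · exact from_f_i he hx.symm
    · obtain ⟨j, hj, hs⟩ := from_f_i (G.mem_edgeSet.mp he).symm hy.symm
      exact ⟨j, hj, Sym2.eq_swap.trans hs⟩

theorem deleteEdges_of_forall_not_mem (h : IsPathComponent G f L) {e : Sym2 V}
    (he : ∀ i ≤ L, f i ∉ e) : IsPathComponent (G.deleteEdges {e}) f L where
  injOn := h.injOn
  adj_succ i hi := by
    rw [deleteEdges_adj, Set.mem_singleton_iff]
    exact ⟨h.adj_succ i hi, fun he' => he i hi.le (he' ▸ Sym2.mem_mk_left _ _)⟩
  eq_of_adj i hi w hw := h.eq_of_adj i hi w ((deleteEdges_adj ..).mp hw).1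

theorem deleteEdges_left (h : IsPathComponent G f L) {j : ℕ} (hj : j < L) :
    IsPathComponent (G.deleteEdges {s(f j, f (j + 1))}) f j where
  injOn := h.injOn.mono (Set.Iic_subset_Iic.mpr hj.le)
  adj_succ i hi := by
    rw [deleteEdges_adj, Set.mem_singleton_iff,
      h.injOn.sym2_mk_eq_iff (show i ≤ L by omega) (show i + 1 ≤ L by omega)
        (show j ≤ L by omega) (show j + 1 ≤ L by omega), Sym2.eq_iff]
    exact ⟨h.adj_succ i (by omega), by omega⟩
  eq_of_adj i hi w hw := by
    rw [deleteEdges_adj, Set.mem_singleton_iff] at hw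
    obtain ⟨k, hk, rfl, hik⟩ := h.eq_of_adj i (by omega) w hw.1
    refine ⟨k, ?_, rfl, hik⟩
    by_contra! hjk
    apply hw.2
    rw [h.injOn.sym2_mk_eq_iff (show i ≤ L by omega) hk (show j ≤ L by omega)
      (show j + 1 ≤ L by omega), Sym2.eq_iff]
    omega

theorem deleteEdges_right (h : IsPathComponent G f L) {j : ℕ} (hj : j < L) :
    IsPathComponent (G.deleteEdges {s(f j, f (j + 1))}) (fun i => f (j + 1 + i)) (L - (j + 1)) := by
  have hrev := h.reverse.deleteEdges_left (j := L - (j + 1)) (by omega)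
  rw [show L - (L - (j + 1)) = j + 1 by omega, show L - (L - (j + 1) + 1) = j by omega,
    Sym2.eq_swap] at hrev
  exact hrev.reverse.congr fun i hi => congrArg f (by omega)

theorem exists_isPathComponent_deleteEdges (h : IsPathComponent G f L) {p : ℕ} (hp : p ≤ L)
    {e : Sym2 V} (he : e ∈ G.edgeSet) : ∃ g L' p', IsPathComponent (G.deleteEdges {e}) g L' ∧
      p' ≤ L' ∧ g p' = f p ∧ min p (L - p) ≤ max p' (L' - p') := by
  rcases h.mem_edgeSet_cases he with ⟨j, hj, rfl⟩ | hout
  · by_cases hpj : p ≤ j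
    · exact ⟨f, j, p, h.deleteEdges_left hj, hpj, rfl, by omega⟩
    · exact ⟨_, _, p - (j + 1), h.deleteEdges_right hj, by omega,
        congrArg f (by omega), by omega⟩
  · exact ⟨f, L, p, h.deleteEdges_of_forall_not_mem hout, hp, rfl, by omega⟩

theorem exists_adj (h : IsPathComponent G f L) (hL : 0 < L) {p : ℕ} (hp : p ≤ L) :
    ∃ w, G.Adj (f p) w := by
  rcases Nat.lt_or_ge p L with hpL | hpL
  · exact ⟨_, h.adj_succ p hpL⟩
  · obtain ⟨i, rfl⟩ : ∃ i, p = i + 1 := ⟨p - 1, by omega⟩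
    exact ⟨_, (h.adj_succ i (by omega)).symm⟩

theorem capturedIn (h : IsPathComponent G f L) {p : ℕ} (hp : p ≤ L) :
    CapturedIn G (f p) (Nat.clog 2 (min p (L - p) + 1) + 1) := by
  induction L using Nat.strong_induction_on generalizing G f p with
  | _ L ih =>
  wlog hside : p ≤ L - p generalizing f p
  · have := this h.reverse (p := L - p) (by omega) (by omega)
    rwa [Nat.sub_sub_self hp, min_comm] at this
  rcases Nat.eq_zero_or_pos L with rfl | hL
  · refine .isolated fun w hw => ?_
    obtain ⟨j, hj, -, hji⟩ := h.eq_of_adj p hp w hw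
    omega
  rw [min_eq_left hside]
  refine .cut s(f p, f (p + 1)) (h.adj_succ p (by omega)) fun w hw => ?_
  have hleft := h.deleteEdges_left (j := p) (by omega)
  obtain ⟨q, hq, hqp, rfl⟩ := (hleft.catMove_iff le_rfl).mp hw
  refine (ih p (by omega) hleft hq).mono ?_
  rw [Nat.clog_two_add_one (d := p) (by omega)]
  exact Nat.add_le_add_right (Nat.clog_mono_right 2 (by omega)) 1

theorem le_of_capturedIn (h : IsPathComponent G f L) (hL : 0 < L) {p t : ℕ} (hp : p ≤ L)
    (hcap : CapturedIn G (f p) t) : Nat.clog 2 (min p (L - p) + 1) + 1 ≤ t := by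
  induction t generalizing G f L p with
  | zero =>
    cases hcap with
    | isolated hiso => exact absurd (h.exists_adj hL hp) (not_exists.mpr hiso)
  | succ t ih =>
    cases hcap with
    | isolated hiso => exact absurd (h.exists_adj hL hp) (not_exists.mpr hiso)
    | cut e he hmove =>
      rcases Nat.eq_zero_or_pos (min p (L - p)) with hd | hd
      · simp [hd]
      obtain ⟨g, L', p', hg, hp', hgp, hmax⟩ := h.exists_isPathComponent_deleteEdges hp he
      rw [← hgp] at hmove
      obtain ⟨q, hq, hqp, hhalf⟩ := exists_ne_half_le_min (by omega) hp' hmax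
      have := ih hg (by omega) hq (hmove _ ((hg.catMove_iff hp').mpr ⟨q, hq, hqp, rfl⟩))
      rw [Nat.clog_two_add_one hd.ne']
      have := Nat.clog_mono_right 2 (show min p (L - p) / 2 + 1 ≤ min q (L' - q) + 1 by omega)
      omega

end IsPathComponent

section cycleGraph

open Fin.NatCast

variable {m : ℕ}

theorem cycleGraph_adj_iff_eq_add_one {x y : Fin (m + 2)} :
    (cycleGraph (m + 2)).Adj x y ↔ y = x + 1 ∨ x = y + 1 := by
  rw [cycleGraph_adj, sub_eq_iff_eq_add, sub_eq_iff_eq_add, add_comm 1 y, add_comm 1 x, or_comm]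

theorem exists_eq_mk_add_one_of_mem_edgeSet_cycleGraph {e : Sym2 (Fin (m + 2))}
    (he : e ∈ (cycleGraph (m + 2)).edgeSet) : ∃ u, e = s(u, u + 1) := by
  induction e using Sym2.ind with
  | _ x y =>
    rw [mem_edgeSet, cycleGraph_adj_iff_eq_add_one] at he
    rcases he with h | h
    · exact ⟨x, by rw [h]⟩
    · exact ⟨y, by rw [h, Sym2.eq_swap]⟩

theorem Fin.natCast_injOn_Iic : Set.InjOn (fun i : ℕ => (i : Fin (m + 1))) (Set.Iic m) := by
  intro i hi j hj hij
  have := congrArg Fin.val hij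
  simp only [Fin.val_natCast, Set.mem_Iic] at this hi hj
  rwa [Nat.mod_eq_of_lt (by omega), Nat.mod_eq_of_lt (by omega)] at this

theorem cycleGraph_deleteEdges_isPathComponent (u : Fin (m + 3)) :
    IsPathComponent ((cycleGraph (m + 3)).deleteEdges {s(u, u + 1)})
      (fun i => u + 1 + i) (m + 2) := by
  set f : ℕ → Fin (m + 3) := fun i => u + 1 + i
  have hinj : Set.InjOn f (Set.Iic (m + 2)) :=
    (add_right_injective (u + 1)).comp_injOn Fin.natCast_injOn_Iic
  have hsucc (i : ℕ) : f (i + 1) = f i + 1 := by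
    show u + 1 + ((i + 1 : ℕ) : Fin (m + 3)) = u + 1 + (i : Fin (m + 3)) + 1
    rw [Nat.cast_succ]
    abel
  have hlast : f (m + 2) + 1 = f 0 := by
    show u + 1 + ((m + 2 : ℕ) : Fin (m + 3)) + 1 = u + 1 + ((0 : ℕ) : Fin (m + 3))
    rw [add_assoc, ← Nat.cast_succ, Fin.natCast_self, Nat.cast_zero]
  have hu : f (m + 2) = u := add_right_cancel (hlast.trans (by simp [f]))
  rw [← hu, hlast]
  refine ⟨hinj, fun i hi => ?_, fun i hi w hw => ?_⟩
  · rw [deleteEdges_adj, Set.mem_singleton_iff, hinj.sym2_mk_eq_iff (show i ≤ m + 2 by omega)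
      (show i + 1 ≤ m + 2 by omega) (show m + 2 ≤ m + 2 from le_rfl) (show 0 ≤ m + 2 by omega),
      Sym2.eq_iff, hsucc,
      cycleGraph_adj_iff_eq_add_one]
    exact ⟨Or.inl rfl, by omega⟩
  · rw [deleteEdges_adj, Set.mem_singleton_iff, cycleGraph_adj_iff_eq_add_one] at hw
    obtain ⟨rfl | hw, hne⟩ := hw
    · rcases Nat.lt_or_ge i (m + 2) with hi' | hi'
      · exact ⟨i + 1, hi', (hsucc i).symm, Or.inl rfl⟩
      · obtain rfl : i = m + 2 := by omega
        exact absurd (by rw [hlast]) hne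
    · rcases i with _ | i
      · obtain rfl : w = f (m + 2) := add_right_cancel (hw.symm.trans hlast.symm)
        exact absurd Sym2.eq_swap hne
      · exact ⟨i, by omega, add_right_cancel (hw.symm.trans (hsucc i)), Or.inr rfl⟩

theorem capturedIn_cycleGraph (v : Fin (m + 3)) :
    CapturedIn (cycleGraph (m + 3)) v (Nat.clog 2 ((m + 3) / 2) + 2) := by
  set k := (m + 3) / 2
  set u := v - ((k + 1 : ℕ) : Fin (m + 3))
  have hP := cycleGraph_deleteEdges_isPathComponent u
  have hv : u + 1 + (k : Fin (m + 3)) = v := by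
    simp only [u, Nat.cast_succ]
    abel
  refine .cut s(u, u + 1) (cycleGraph_adj_iff_eq_add_one.mpr (Or.inl rfl)) fun w hw => ?_
  rw [← hv] at hw
  obtain ⟨q, hq, hqk, rfl⟩ := (hP.catMove_iff (show k ≤ m + 2 by omega)).mp hw
  refine (hP.capturedIn hq).mono ?_
  have := Nat.clog_mono_right 2 (show min q (m + 2 - q) + 1 ≤ k by omega)
  omega

theorem le_of_capturedIn_cycleGraph {v : Fin (m + 3)} {t : ℕ}
    (h : CapturedIn (cycleGraph (m + 3)) v t) : Nat.clog 2 ((m + 3) / 2) + 2 ≤ t := by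
  set k := (m + 3) / 2
  cases h with
  | isolated hiso => exact absurd (cycleGraph_adj_iff_eq_add_one.mpr (Or.inl rfl)) (hiso (v + 1))
  | cut e he hmove =>
    obtain ⟨u, rfl⟩ := exists_eq_mk_add_one_of_mem_edgeSet_cycleGraph he
    have hP := cycleGraph_deleteEdges_isPathComponent u
    set p := (v - (u + 1)).val
    have hv : u + 1 + (p : Fin (m + 3)) = v := by simp [p]
    obtain ⟨q, hq, hqp, hkq⟩ : ∃ q ≤ m + 2, q ≠ p ∧ k ≤ min q (m + 2 - q) + 1 := by
      by_cases hpk : p = k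
      · exact ⟨k - 1, by omega, by omega, by omega⟩
      · exact ⟨k, by omega, Ne.symm hpk, by omega⟩
    rw [← hv] at hmove
    have := hP.le_of_capturedIn (by omega) hq
      (hmove _ ((hP.catMove_iff (by omega)).mpr ⟨q, hq, hqp, rfl⟩))
    have := Nat.clog_mono_right 2 hkq
    omega

end cycleGraph

/-- For `n ≥ 3`, `cat(C_n) = ⌈log₂ (2⌊n/2⌋)⌉ + 1`. -/
theorem catNum_cycleGraph (n : ℕ) (hn : 3 ≤ n) :
    catNum (SimpleGraph.cycleGraph n) = ((Nat.clog 2 (2 * (n / 2)) + 1 : ℕ) : ℕ∞) := by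
  obtain ⟨m, rfl⟩ : ∃ m, n = m + 3 := ⟨n - 3, by omega⟩
  rw [Nat.clog_two_mul (by omega)]
  exact (iSup_congr fun v => catVNum_eq (capturedIn_cycleGraph v)
    fun _ => le_of_capturedIn_cycleGraph).trans iSup_const
end

section
/- Let G be a connected graph and v a vertex with cat(G, v) ≥ 2. Then cat(G, v) = 2 if and only if there exists an edge e of G such that in G − e, the connected component containing v is a star with v as its center. -/
open SimpleGraph

universe u

/-!
One cut captures the cat exactly when its vertex has at most one neighbour. So after a first
cut `e`, a second cut suffices iff every vertex the cat can move to in `G - e` has degree at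
most one. Two such adjacent vertices `x, y` form a whole component `{x, y}`, which cannot be the
component of `v` unless `v ∈ {x, y}`; hence every edge of that component touches `v`.
-/

variable {V : Type u} {G : SimpleGraph V} {v w : V}

def IsStarCenter (G : SimpleGraph V) (v : V) : Prop :=
  ∀ x y : V, G.Adj x y → G.Reachable v x → x = v ∨ y = v

lemma CapturedIn.mono_s7 {m n : ℕ} (h : CapturedIn G v m) (hmn : m ≤ n) : CapturedIn G v n := by
  induction h generalizing n with
  | isolated h => exact .isolated h
  | cut e he _ ih =>
    obtain ⟨n, rfl⟩ : ∃ n', n = n' + 1 := ⟨n - 1, by omega⟩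
    exact .cut e he fun w hw => ih w hw (by omega)

lemma catVNum_le_iff {n : ℕ} : catVNum G v ≤ n ↔ CapturedIn G v n := by
  refine ⟨fun hle => ?_, fun h => sInf_le ⟨n, h, rfl⟩⟩
  by_contra hn
  have : ((n + 1 : ℕ) : ℕ∞) ≤ catVNum G v := by
    refine le_sInf ?_
    rintro _ ⟨m, hm, rfl⟩
    have : n < m := by
      by_contra! hmn
      exact hn (hm.mono_s7 hmn)
    exact_mod_cast this
  have hcontra := this.trans hle
  norm_cast at hcontra
  omega

lemma CatMove.exists_adj (hw : CatMove G v w) : ∃ u, G.Adj v u := by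
  obtain ⟨hne, ⟨p⟩⟩ := hw
  cases p with
  | nil => exact (hne rfl).elim
  | cons h _ => exact ⟨_, h⟩

lemma capturedIn_zero_iff : CapturedIn G v 0 ↔ ∀ u, ¬ G.Adj v u :=
  ⟨fun | .isolated h => h, .isolated⟩

lemma capturedIn_one_iff : CapturedIn G v 1 ↔ (G.neighborSet v).Subsingleton := by
  constructor
  · rintro (hiso | ⟨e, -, hcap⟩) b hb c hc
    · exact absurd hb (hiso b)
    -- every edge at `v` other than `e` would survive the cut and give the cat a move
    have hedge : ∀ u, G.Adj v u → s(v, u) = e := fun u hu => by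
      by_contra hne
      have hmove : CatMove (G.deleteEdges {e}) v u :=
        ⟨hu.ne, (deleteEdges_adj.2 ⟨hu, by simpa using hne⟩).reachable⟩
      exact capturedIn_zero_iff.1 (hcap u hmove) v
        (deleteEdges_adj.2 ⟨hu.symm, by simpa [Sym2.eq_swap] using hne⟩)
    rcases Sym2.eq_iff.1 ((hedge b hb).trans (hedge c hc).symm) with ⟨-, h⟩ | ⟨-, rfl⟩
    exacts [h, (hb.ne rfl).elim]
  · intro hsub
    by_cases hiso : ∀ u, ¬ G.Adj v u
    · exact .isolated hiso
    obtain ⟨b, hb⟩ := not_forall_not.1 hiso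
    refine .cut s(v, b) hb fun w hw => ?_
    obtain ⟨u, hu⟩ := hw.exists_adj
    obtain ⟨hu, hne⟩ := deleteEdges_adj.1 hu
    exact (hne (by rw [hsub hu hb]; rfl)).elim

lemma SimpleGraph.Adj.eq_or_eq_of_reachable {x y z : V} (hxy : G.Adj x y)
    (hx : (G.neighborSet x).Subsingleton) (hy : (G.neighborSet y).Subsingleton)
    (hz : G.Reachable x z) : z = x ∨ z = y := by
  rw [reachable_iff_reflTransGen] at hz
  induction hz with
  | refl => exact .inl rfl
  | tail _ hbc ih =>
    rcases ih with rfl | rfl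
    · exact .inr (hx hbc hxy)
    · exact .inl (hy hbc hxy.symm)

lemma forall_catMove_capturedIn_one_iff :
    (∀ w, CatMove G v w → CapturedIn G w 1) ↔ IsStarCenter G v := by
  simp only [capturedIn_one_iff]
  constructor
  · intro hcap x y hxy hvx
    by_contra! hxyv
    have hvy : G.Reachable v y := hvx.trans hxy.reachable
    rcases hxy.eq_or_eq_of_reachable (hcap x ⟨hxyv.1.symm, hvx⟩) (hcap y ⟨hxyv.2.symm, hvy⟩)
      hvx.symm with h | h
    exacts [hxyv.1 h.symm, hxyv.2 h.symm]
  · rintro hstar w ⟨hvw, hreach⟩ a ha b hb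
    have hwv : w ≠ v := hvw.symm
    rw [(hstar w a ha hreach).resolve_left hwv, (hstar w b hb hreach).resolve_left hwv]

lemma capturedIn_two_iff :
    CapturedIn G v 2 ↔
      (∀ u, ¬ G.Adj v u) ∨ ∃ e ∈ G.edgeSet, IsStarCenter (G.deleteEdges {e}) v := by
  simp only [← forall_catMove_capturedIn_one_iff]
  constructor
  · rintro (hiso | ⟨e, he, hcap⟩)
    exacts [.inl hiso, .inr ⟨e, he, hcap⟩]
  · rintro (hiso | ⟨e, he, hcap⟩)
    exacts [.isolated hiso, .cut e he hcap]

theorem catVNum_eq_two_iff_general {V : Type u} (G : SimpleGraph V)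
    (v : V) (h2 : 2 ≤ catVNum G v) :
    catVNum G v = 2 ↔ ∃ e ∈ G.edgeSet,
      ∀ x y : V, (G.deleteEdges {e}).Adj x y →
        (G.deleteEdges {e}).Reachable v x → (x = v ∨ y = v) := by
  have hnot_isolated : ¬ ∀ u, ¬ G.Adj v u := fun hiso => by
    have := h2.trans (catVNum_le_iff.2 (capturedIn_zero_iff.2 hiso))
    norm_num at this
  have hle : catVNum G v ≤ 2 ↔ CapturedIn G v 2 := catVNum_le_iff (n := 2)
  rw [le_antisymm_iff, and_iff_left h2, hle, capturedIn_two_iff, or_iff_right hnot_isolated]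
  rfl

/-- For a connected `G` and `v` with `cat(G,v) ≥ 2`,
`cat(G,v) = 2` iff some edge deletion leaves `v` the center of a star component. -/
theorem catVNum_eq_two_iff {V : Type u} (G : SimpleGraph V) (hc : G.Connected)
    (v : V) (h2 : 2 ≤ catVNum G v) :
    catVNum G v = 2 ↔ ∃ e ∈ G.edgeSet,
      ∀ x y : V, (G.deleteEdges {e}).Adj x y →
        (G.deleteEdges {e}).Reachable v x → (x = v ∨ y = v) :=
  catVNum_eq_two_iff_general G v h2
end

section
/- The cycle C_5 has cat number 3, and moreover if G consists of C_5 together with any additional edge incident to the cycle, then cat(G) ≥ 4. -/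
open SimpleGraph

universe u

/-!
The centre `x₂` of a path `x₀x₁x₂x₃x₄` survives two cuts: whichever edge is cut, `x₁` or `x₃`
keeps both of its path edges, so the cat can move there and still has a move after the next cut.
Every vertex of `C₅` is such a centre, hence `cat(C₅) ≥ 3`; conversely, cutting the edge opposite
the cat leaves it on a path, where two more cuts trap it.

With one more edge at `c₀`, a chord `c₀c₂` (up to reflection) or a pendant edge `c₀y`, let the cat
start at `c₃`, resp. `c₂`. After any first cut, some path on five vertices survives whose first or
second vertex is the cat's, and the cat walks to its centre. The two graphs are treated as
explicit graphs on `Fin 5` and `Fin 6` and transported to `G` along an embedding: the game is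
invariant under relabelling and does not see isolated vertices.
-/

section

variable {V : Type u} {W : Type*} {G : SimpleGraph V} {v : V}

theorem SimpleGraph.Reachable.mem_of_adj_closed {S : Set V} {u w : V}
    (hS : ∀ x ∈ S, ∀ y, G.Adj x y → y ∈ S) (hu : u ∈ S) (h : G.Reachable u w) : w ∈ S := by
  obtain ⟨p⟩ := h
  induction p with
  | nil => exact hu
  | cons ha _ ih => exact ih (hS _ hu _ ha)

theorem SimpleGraph.map_deleteEdges (f : W ↪ V) (H : SimpleGraph W) (s : Set (Sym2 W)) :
    (H.map f).deleteEdges (f.sym2Map '' s) = (H.deleteEdges s).map f := by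
  ext a b
  simp only [deleteEdges_adj, map_adj]
  constructor
  · rintro ⟨⟨a, b, h, rfl, rfl⟩, hne⟩
    exact ⟨a, b, ⟨h, fun he => hne ⟨_, he, rfl⟩⟩, rfl, rfl⟩
  · rintro ⟨a, b, ⟨h, hne⟩, rfl, rfl⟩
    refine ⟨⟨a, b, h, rfl, rfl⟩, ?_⟩
    rwa [← Sym2.map_mk, ← Function.Embedding.sym2Map_apply, f.sym2Map.injective.mem_set_image]

theorem SimpleGraph.map_fromEdgeSet (f : W ↪ V) (s : Set (Sym2 W)) :
    (fromEdgeSet s).map f = fromEdgeSet (f.sym2Map '' s) := by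
  ext a b
  simp only [map_adj, fromEdgeSet_adj, Set.mem_image]
  constructor
  · rintro ⟨a, b, ⟨h, hne⟩, rfl, rfl⟩
    exact ⟨⟨s(a, b), h, rfl⟩, f.injective.ne hne⟩
  · rintro ⟨⟨e, he, hab⟩, hne⟩
    induction e using Sym2.ind with
    | _ x y =>
      rcases Sym2.eq_iff.1 (hab : s(f x, f y) = s(a, b)) with ⟨rfl, rfl⟩ | ⟨rfl, rfl⟩
      · exact ⟨x, y, ⟨he, fun h => hne (h ▸ rfl)⟩, rfl, rfl⟩
      · exact ⟨y, x, ⟨Sym2.eq_swap ▸ he, fun h => hne (h ▸ rfl)⟩, rfl, rfl⟩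

namespace CapturedIn

theorem mono_s12 {m n : ℕ} (h : CapturedIn G v m) (hmn : m ≤ n) : CapturedIn G v n := by
  induction h generalizing n with
  | isolated h => exact .isolated h
  | cut e he _ ih =>
    obtain ⟨n, rfl⟩ : ∃ k, n = k + 1 := ⟨n - 1, by omega⟩
    exact .cut e he fun w hw => ih w hw (by omega)

theorem of_map {f : W ↪ V} {H : SimpleGraph W} {v : W} {n : ℕ}
    (h : CapturedIn (H.map f) (f v) n) : CapturedIn H v n := by
  generalize hG : H.map f = G, hx : f v = x at h
  induction h generalizing H v with
  | isolated hiso =>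
    subst hG hx
    exact .isolated fun w hw => hiso (f w) (map_adj_apply.2 hw)
  | cut e he _ ih =>
    subst hG hx
    rw [edgeSet_map] at he
    obtain ⟨e, he, rfl⟩ := he
    have hdel : (H.map f).deleteEdges {f.sym2Map e} = (H.deleteEdges {e}).map f := by
      rw [← Set.image_singleton, map_deleteEdges]
    refine .cut e he fun w hw => ih (f w) ⟨f.injective.ne hw.1, ?_⟩ hdel.symm rfl
    rw [hdel]
    exact hw.2.map (Embedding.map f _).toHom

end CapturedIn

theorem catVNum_le_of_capturedIn {n : ℕ} (h : CapturedIn G v n) : catVNum G v ≤ n :=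
  sInf_le ⟨n, h, rfl⟩

theorem le_catVNum_of_not_capturedIn {n : ℕ} (h : ¬ CapturedIn G v n) : n + 1 ≤ catVNum G v := by
  refine le_sInf ?_
  rintro _ ⟨m, hm, rfl⟩
  have : n < m := lt_of_not_ge fun hmn => h (hm.mono_s12 hmn)
  exact_mod_cast this

theorem capturedIn_one_of_forall_adj_eq {a : V} (h : ∀ w, G.Adj v w → w = a) :
    CapturedIn G v 1 := by
  by_cases hva : G.Adj v a
  · refine .cut s(v, a) hva fun w hw => absurd ?_ hw.1
    refine (hw.2.mem_of_adj_closed (S := {v}) ?_ rfl).symm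
    rintro x rfl y hy
    obtain ⟨hy, hne⟩ := deleteEdges_adj.1 hy
    exact (hne (by rw [h y hy]; rfl)).elim
  · exact .isolated fun w hw => hva (h w hw ▸ hw)

theorem capturedIn_two_of_forall_adj {x₀ x₁ x₂ : V} (h₀₁ : G.Adj x₀ x₁)
    (h₁ : ∀ w, G.Adj x₁ w → w = x₀ ∨ w = x₂) (h₂ : ∀ w, G.Adj x₂ w → w = x₁) :
    CapturedIn G x₁ 2 := by
  refine .cut s(x₀, x₁) h₀₁ fun w hw => ?_
  have hconf : w ∈ ({x₁, x₂} : Set V) := by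
    refine hw.2.mem_of_adj_closed ?_ (by simp)
    rintro x (rfl | rfl) y hy
    · obtain ⟨hy, hne⟩ := deleteEdges_adj.1 hy
      rcases h₁ y hy with rfl | rfl
      · exact (hne (by simp [Sym2.eq_swap])).elim
      · simp
    · simp [h₂ y (deleteEdges_adj.1 hy).1]
  obtain rfl : w = x₂ := hconf.resolve_left hw.1.symm
  exact capturedIn_one_of_forall_adj_eq fun y hy => h₂ y hy.1

theorem not_capturedIn_zero_of_adj {a : V} (h : G.Adj v a) : ¬ CapturedIn G v 0 := by
  rintro ⟨hiso⟩
  exact hiso a h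

theorem not_capturedIn_succ {n : ℕ} {a : V} (ha : G.Adj v a)
    (h : ∀ e ∈ G.edgeSet, ∃ w, CatMove (G.deleteEdges {e}) v w ∧
      ¬ CapturedIn (G.deleteEdges {e}) w n) :
    ¬ CapturedIn G v (n + 1) := by
  rintro (⟨hiso⟩ | ⟨e, he, hcap⟩)
  · exact hiso a ha
  · obtain ⟨w, hw, hnc⟩ := h e he
    exact hnc (hcap w hw)

theorem not_capturedIn_one_of_adj_of_adj {a b : V} (hab : a ≠ b) (ha : G.Adj v a)
    (hb : G.Adj v b) : ¬ CapturedIn G v 1 := by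
  refine not_capturedIn_succ ha fun e _ => ?_
  have key : ∀ x, G.Adj v x → s(v, x) ≠ e →
      ∃ w, CatMove (G.deleteEdges {e}) v w ∧ ¬ CapturedIn (G.deleteEdges {e}) w 0 := by
    intro x hx hne
    have hx' : (G.deleteEdges {e}).Adj v x := deleteEdges_adj.2 ⟨hx, hne⟩
    exact ⟨x, ⟨hx.ne, hx'.reachable⟩, not_capturedIn_zero_of_adj hx'.symm⟩
  by_cases hae : s(v, a) = e
  · exact key b hb fun hbe => hab (Sym2.congr_right.1 (hae.trans hbe.symm))
  · exact key a ha hae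

theorem exists_catMove_not_capturedIn_one {e : Sym2 V} {w a : V} (hvw : G.Adj v w)
    (hwa : G.Adj w a) (hav : a ≠ v) (hvw_e : s(v, w) ≠ e) (hwa_e : s(w, a) ≠ e) :
    ∃ w, CatMove (G.deleteEdges {e}) v w ∧ ¬ CapturedIn (G.deleteEdges {e}) w 1 := by
  have h₁ : (G.deleteEdges {e}).Adj v w := deleteEdges_adj.2 ⟨hvw, hvw_e⟩
  have h₂ : (G.deleteEdges {e}).Adj w a := deleteEdges_adj.2 ⟨hwa, hwa_e⟩
  exact ⟨w, ⟨hvw.ne, h₁.reachable⟩, not_capturedIn_one_of_adj_of_adj hav.symm h₁.symm h₂⟩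

structure IsPathFive (G : SimpleGraph V) (x₀ x₁ x₂ x₃ x₄ : V) : Prop where
  adj₀₁ : G.Adj x₀ x₁
  adj₁₂ : G.Adj x₁ x₂
  adj₂₃ : G.Adj x₂ x₃
  adj₃₄ : G.Adj x₃ x₄
  nodup : [x₀, x₁, x₂, x₃, x₄].Nodup

theorem IsPathFive.not_capturedIn_two {x₀ x₁ x₂ x₃ x₄ : V}
    (hp : IsPathFive G x₀ x₁ x₂ x₃ x₄) : ¬ CapturedIn G x₂ 2 := by
  have hd := hp.nodup
  refine not_capturedIn_succ hp.adj₁₂.symm fun e _ => ?_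
  by_cases hleft : s(x₀, x₁) ≠ e ∧ s(x₁, x₂) ≠ e
  · exact exists_catMove_not_capturedIn_one hp.adj₁₂.symm hp.adj₀₁.symm (by grind)
      (by rw [Sym2.eq_swap]; exact hleft.2) (by rw [Sym2.eq_swap]; exact hleft.1)
  · have he : e = s(x₀, x₁) ∨ e = s(x₁, x₂) := by grind
    exact exists_catMove_not_capturedIn_one hp.adj₂₃ hp.adj₃₄ (by grind)
      (by grind [Sym2.eq_iff]) (by grind [Sym2.eq_iff])

theorem not_capturedIn_three_of_isPathFive {a : V} (ha : G.Adj v a)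
    (h : ∀ e ∈ G.edgeSet, ∃ x₀ x₁ x₂ x₃ x₄, IsPathFive (G.deleteEdges {e}) x₀ x₁ x₂ x₃ x₄ ∧
      (v = x₀ ∨ v = x₁)) :
    ¬ CapturedIn G v 3 := by
  refine not_capturedIn_succ ha fun e he => ?_
  obtain ⟨x₀, x₁, x₂, x₃, x₄, hp, hv⟩ := h e he
  have hd := hp.nodup
  refine ⟨x₂, ⟨by grind, ?_⟩, hp.not_capturedIn_two⟩
  rcases hv with rfl | rfl
  · exact hp.adj₀₁.reachable.trans hp.adj₁₂.reachable
  · exact hp.adj₁₂.reachable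

theorem cycleGraph_five_capturedIn_three (v : Fin 5) : CapturedIn (cycleGraph 5) v 3 := by
  refine .cut s(v + 2, v + 3) (by revert v; decide) fun w hw => ?_
  obtain ⟨hwv, -⟩ := hw
  have hw : w = v + 1 ∨ w = v + 2 ∨ w = v + 3 ∨ w = v + 4 := by revert v w; decide
  rcases hw with rfl | rfl | rfl | rfl
  · exact capturedIn_two_of_forall_adj (x₀ := v) (x₂ := v + 2) (by revert v; decide)
      (by revert v; decide) (by revert v; decide)
  · exact (capturedIn_one_of_forall_adj_eq (a := v + 1) (by revert v; decide)).mono_s12 (by omega)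
  · exact (capturedIn_one_of_forall_adj_eq (a := v + 4) (by revert v; decide)).mono_s12 (by omega)
  · exact capturedIn_two_of_forall_adj (x₀ := v) (x₂ := v + 3) (by revert v; decide)
      (by revert v; decide) (by revert v; decide)

theorem cycleGraph_five_not_capturedIn_two : ¬ CapturedIn (cycleGraph 5) 0 2 :=
  IsPathFive.not_capturedIn_two (x₀ := 3) (x₁ := 4) (x₃ := 1) (x₄ := 2) (by constructor <;> decide)

theorem catNum_cycleGraph_five : catNum (cycleGraph 5) = 3 :=
  le_antisymm (iSup_le fun v => catVNum_le_of_capturedIn (cycleGraph_five_capturedIn_three v))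
    (le_iSup_of_le 0 (le_catVNum_of_not_capturedIn cycleGraph_five_not_capturedIn_two))

def cycleFiveWithChord : SimpleGraph (Fin 5) :=
  fromEdgeSet {s(0, 1), s(1, 2), s(2, 3), s(3, 4), s(4, 0), s(0, 2)}

def cycleFiveWithPendant : SimpleGraph (Fin 6) :=
  fromEdgeSet {s(0, 1), s(1, 2), s(2, 3), s(3, 4), s(4, 0), s(0, 5)}

theorem cycleFiveWithChord_not_capturedIn_three : ¬ CapturedIn cycleFiveWithChord 3 3 := by
  unfold cycleFiveWithChord
  refine not_capturedIn_three_of_isPathFive (a := 4) (by decide) fun e he => ?_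
  rw [edgeSet_fromEdgeSet] at he
  rcases he.1 with rfl | rfl | rfl | rfl | rfl | rfl
  · exact ⟨3, 4, 0, 2, 1, by constructor <;> decide, .inl rfl⟩
  · exact ⟨2, 3, 4, 0, 1, by constructor <;> decide, .inr rfl⟩
  · exact ⟨3, 4, 0, 1, 2, by constructor <;> decide, .inl rfl⟩
  · exact ⟨3, 2, 1, 0, 4, by constructor <;> decide, .inl rfl⟩
  · exact ⟨4, 3, 2, 1, 0, by constructor <;> decide, .inr rfl⟩
  · exact ⟨2, 3, 4, 0, 1, by constructor <;> decide, .inr rfl⟩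

theorem cycleFiveWithPendant_not_capturedIn_three : ¬ CapturedIn cycleFiveWithPendant 2 3 := by
  unfold cycleFiveWithPendant
  refine not_capturedIn_three_of_isPathFive (a := 3) (by decide) fun e he => ?_
  rw [edgeSet_fromEdgeSet] at he
  rcases he.1 with rfl | rfl | rfl | rfl | rfl | rfl
  · exact ⟨1, 2, 3, 4, 0, by constructor <;> decide, .inr rfl⟩
  · exact ⟨2, 3, 4, 0, 1, by constructor <;> decide, .inl rfl⟩
  · exact ⟨2, 1, 0, 4, 3, by constructor <;> decide, .inl rfl⟩
  · exact ⟨3, 2, 1, 0, 4, by constructor <;> decide, .inr rfl⟩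
  · exact ⟨3, 2, 1, 0, 5, by constructor <;> decide, .inr rfl⟩
  · exact ⟨3, 2, 1, 0, 4, by constructor <;> decide, .inr rfl⟩

theorem not_capturedIn_of_edgeSet_eq_image (f : W ↪ V) {s : Set (Sym2 W)} {v : W} {n : ℕ}
    (hG : G.edgeSet = f.sym2Map '' s) (h : ¬ CapturedIn (fromEdgeSet s) v n) :
    ¬ CapturedIn G (f v) n := by
  rw [← fromEdgeSet_edgeSet G, hG, ← map_fromEdgeSet]
  exact fun hc => h hc.of_map

theorem exists_not_capturedIn_three_of_edgeSet_eq {c₀ c₁ c₂ c₃ c₄ w : V}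
    (hc : [c₀, c₁, c₂, c₃, c₄].Nodup) (hw₁ : w ≠ c₁) (hw₄ : w ≠ c₄)
    (hG : G.edgeSet = {s(c₀, c₁), s(c₁, c₂), s(c₂, c₃), s(c₃, c₄), s(c₄, c₀), s(c₀, w)}) :
    ∃ v, ¬ CapturedIn G v 3 := by
  have hw₀ : w ≠ c₀ := by
    have : s(c₀, w) ∈ G.edgeSet := by simp [hG]
    exact (G.ne_of_adj this).symm
  by_cases hw₂ : w = c₂
  · subst w
    let f : Fin 5 ↪ V := ⟨![c₀, c₁, c₂, c₃, c₄], List.nodup_ofFn.1 (by simpa using hc)⟩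
    refine ⟨f 3, not_capturedIn_of_edgeSet_eq_image f ?_ cycleFiveWithChord_not_capturedIn_three⟩
    simp [hG, f, Set.image_insert_eq]
  by_cases hw₃ : w = c₃
  · subst w
    let f : Fin 5 ↪ V := ⟨![c₀, c₄, c₃, c₂, c₁], List.nodup_ofFn.1 (by simp at hc ⊢; grind)⟩
    refine ⟨f 3, not_capturedIn_of_edgeSet_eq_image f ?_ cycleFiveWithChord_not_capturedIn_three⟩
    simp only [hG, f, Set.image_insert_eq, Set.image_singleton, Function.Embedding.sym2Map_apply,
      Function.Embedding.coeFn_mk, Sym2.map_mk, Matrix.cons_val_zero, Matrix.cons_val_one,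
      Matrix.cons_val]
    rw [Sym2.eq_swap (a := c₄) (b := c₃), Sym2.eq_swap (a := c₃) (b := c₂),
      Sym2.eq_swap (a := c₂) (b := c₁), Sym2.eq_swap (a := c₁) (b := c₀),
      Sym2.eq_swap (a := c₀) (b := c₄)]
    ext
    simp only [Set.mem_insert_iff, Set.mem_singleton_iff]
    tauto
  · let f : Fin 6 ↪ V := ⟨![c₀, c₁, c₂, c₃, c₄, w], List.nodup_ofFn.1 (by simp at hc ⊢; grind)⟩
    refine ⟨f 2, not_capturedIn_of_edgeSet_eq_image f ?_ cycleFiveWithPendant_not_capturedIn_three⟩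
    simp [hG, f, Set.image_insert_eq]

theorem SimpleGraph.Walk.IsCycle.exists_edges_eq_of_length_eq_five {c : V} {p : G.Walk c c}
    (hp : p.IsCycle) (hlen : p.length = 5) : ∃ c₁ c₂ c₃ c₄, [c, c₁, c₂, c₃, c₄].Nodup ∧
      p.edges = [s(c, c₁), s(c₁, c₂), s(c₂, c₃), s(c₃, c₄), s(c₄, c)] := by
  match p, hp, hlen with
  | .cons _ (.cons _ (.cons _ (.cons _ (.cons _ .nil)))), hp, _ =>
    refine ⟨_, _, _, _, ?_, rfl⟩
    exact (List.perm_append_singleton _ _).nodup_iff.1 hp.support_nodup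

theorem exists_not_capturedIn_three_of_isCycle {c w : V} {p : G.Walk c c} (hp : p.IsCycle)
    (hlen : p.length = 5) (hw : s(c, w) ∉ p.edges)
    (hG : G.edgeSet = {f | f ∈ p.edges} ∪ {s(c, w)}) : ∃ v, ¬ CapturedIn G v 3 := by
  obtain ⟨c₁, c₂, c₃, c₄, hc, hedges⟩ := hp.exists_edges_eq_of_length_eq_five hlen
  rw [hedges] at hw hG
  refine exists_not_capturedIn_three_of_edgeSet_eq (w := w) hc ?_ ?_ ?_
  · rintro rfl
    simp at hw
  · rintro rfl
    simp [Sym2.eq_swap] at hw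
  · rw [hG]
    ext
    simp only [List.mem_cons, List.not_mem_nil, or_false, Set.union_singleton,
      Set.mem_insert_iff, Set.mem_ofPred_eq, Set.mem_singleton_iff]
    tauto

end

/-- `cat(C₅) = 3`, and `C₅` plus any additional edge meeting the
cycle has cat number at least 4. -/
theorem catNum_C5 :
    catNum (SimpleGraph.cycleGraph 5) = 3 ∧
    ∀ {V : Type u} (G : SimpleGraph V) (c : V) (p : G.Walk c c),
      p.IsCycle → p.length = 5 →
      ∀ e ∈ G.edgeSet, e ∉ p.edges → (∃ x ∈ p.support, x ∈ e) →
      G.edgeSet = {f | f ∈ p.edges} ∪ {e} →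
      4 ≤ catNum G := by
  classical
  refine ⟨catNum_cycleGraph_five, ?_⟩
  rintro V G c p hp hlen e - hep ⟨x, hx, hxe⟩ hG
  obtain ⟨w, rfl⟩ := Sym2.mem_iff_exists.1 hxe
  have hmem : ∀ f, f ∈ (p.rotate x hx).edges ↔ f ∈ p.edges :=
    fun _ => (p.rotate_edges x hx).mem_iff
  obtain ⟨v, hv⟩ := exists_not_capturedIn_three_of_isCycle (hp.rotate hx)
    ((p.length_rotate x hx).trans hlen) (by rwa [hmem]) (by simpa only [hmem] using hG)
  exact le_iSup_of_le v (le_catVNum_of_not_capturedIn hv)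
end
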